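/- arXiv:2003.07513 — 4 statements merged into one kernel-verified Lean document; each statement's English description precedes it below -/
import Mathlib

section
/- Let V be a finite multiset of n points (voters) in ℝ^d, and let p be the point whose i-th coordinate is a median of the multiset of i-th coordinates of V, for each i = 1, …, d. Then for every β with 0 < β < 1/√d and every q ∈ ℝ^d with q ≠ p, the number of voters v ∈ V with β·|p v| < |q v| is at least the number of voters v ∈ V with β·|p v| > |q v|. In particular p is a β-plurality point for every β < 1/√d. -/
open scoped Classical

set_option maxHeartbeats 1000000

private lemma countP_mono_aux {α : Type*} {p q : α → Prop} [DecidablePred p] [DecidablePred q]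
    (s : Multiset α) (h : ∀ a, p a → q a) : s.countP p ≤ s.countP q := by
  rw [Multiset.countP_eq_card_filter, Multiset.countP_eq_card_filter]
  exact Multiset.card_le_card (Multiset.monotone_filter_right s h)

private lemma quad_pos (c S a R : ℝ) (hc : 0 < c) (hR : 0 < R)
    (hS : S ^ 2 < c * a ^ 2 * R ^ 2 ∨ S ≤ 0) :
    0 < c * a ^ 2 - 2 * S + R ^ 2 := by
  rcases hS with hS | hS
  · rcases le_or_gt S 0 with h | h
    · nlinarith [mul_nonneg hc.le (sq_nonneg a), mul_pos hR hR]
    · have h2 : 0 < c * a ^ 2 + R ^ 2 + 2 * S := by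
        nlinarith [mul_nonneg hc.le (sq_nonneg a), mul_pos hR hR]
      nlinarith [sq_nonneg (c * a ^ 2 - R ^ 2)]
  · nlinarith [mul_nonneg hc.le (sq_nonneg a), mul_pos hR hR]

/-- If `p` is a coordinatewise-median point of a finite multiset `V` of voters in ℝ^d,
then for every `0 < β < 1/√d` and every `q ≠ p`, the number of voters won by `p` against `q`
is at least the number of voters lost; i.e. `p` is a β-plurality point for all `β < 1/√d`. -/
theorem coordinatewise_median_is_beta_plurality
    (d : ℕ) (V : Multiset (EuclideanSpace ℝ (Fin d)))
    (p : EuclideanSpace ℝ (Fin d))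
    (hmed : ∀ i : Fin d,
      (V.countP (fun v => v i < p i) : ℝ) ≤ (V.card : ℝ) / 2 ∧
      (V.countP (fun v => p i < v i) : ℝ) ≤ (V.card : ℝ) / 2)
    (β : ℝ) (hβ0 : 0 < β) (hβ : β < 1 / Real.sqrt d)
    (q : EuclideanSpace ℝ (Fin d)) (hq : q ≠ p) :
    V.countP (fun v => β * dist p v > dist q v) ≤
      V.countP (fun v => β * dist p v < dist q v) := by
  -- d = 0 is impossible since then q = p
  rcases Nat.eq_zero_or_pos d with hd0 | hd0
  · subst hd0
    exact absurd (by ext j; exact j.elim0 : q = p) hq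
  have hdpos : (0 : ℝ) < d := by exact_mod_cast hd0
  -- β^2 * d < 1
  have hβd : β ^ 2 * d < 1 := by
    have hsd : (0:ℝ) < Real.sqrt d := Real.sqrt_pos.mpr hdpos
    have h1 : β * Real.sqrt d < 1 := by
      rw [div_eq_mul_inv, one_mul] at hβ
      calc β * Real.sqrt d < (Real.sqrt d)⁻¹ * Real.sqrt d :=
            mul_lt_mul_of_pos_right hβ hsd
        _ = 1 := inv_mul_cancel₀ hsd.ne'
    have h2 : (Real.sqrt d) ^ 2 = d := Real.sq_sqrt hdpos.le
    nlinarith [mul_pos hβ0 hsd]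
  -- the displacement r = q - p
  set r : EuclideanSpace ℝ (Fin d) := q - p with hr
  have hrne : r ≠ 0 := sub_ne_zero.mpr hq
  have hR : 0 < ‖r‖ := norm_pos_iff.mpr hrne
  -- choose a coordinate with large |r i|
  have : Nonempty (Fin d) := ⟨⟨0, hd0⟩⟩
  obtain ⟨i, -, hi⟩ := Finset.exists_max_image Finset.univ (fun j => (r j) ^ 2)
    ⟨Classical.arbitrary (Fin d), Finset.mem_univ _⟩
  have hnorm : ‖r‖ ^ 2 = ∑ j, (r j) ^ 2 := by
    rw [EuclideanSpace.norm_eq]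
    rw [Real.sq_sqrt (Finset.sum_nonneg fun j _ => sq_nonneg _)]
    simp [sq_abs]
  have hri : ‖r‖ ^ 2 ≤ d * (r i) ^ 2 := by
    calc ‖r‖ ^ 2 = ∑ j, (r j) ^ 2 := hnorm
      _ ≤ ∑ _j : Fin d, (r i) ^ 2 :=
          Finset.sum_le_sum fun j _ => hi j (Finset.mem_univ j)
      _ = d * (r i) ^ 2 := by simp [mul_comm]
  -- sign
  set s : ℝ := if 0 ≤ r i then 1 else -1 with hs
  have hs2 : s ^ 2 = 1 := by
    rcases le_or_gt 0 (r i) with h | h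
    · simp [hs, if_pos h]
    · simp [hs, if_neg (not_le.mpr h)]
  have hsri : 0 ≤ s * r i := by
    rcases le_or_gt 0 (r i) with h | h
    · simp only [hs, if_pos h, one_mul]; exact h
    · simp only [hs, if_neg (not_le.mpr h)]; nlinarith
  -- key geometric fact
  have key : ∀ v : EuclideanSpace ℝ (Fin d), s * (v i - p i) ≤ 0 →
      β * dist p v < dist q v := by
    intro v hv
    set w : EuclideanSpace ℝ (Fin d) := v - p with hw
    have hdpv : dist p v = ‖w‖ := by rw [dist_comm, dist_eq_norm]
    have hdqv : dist q v = ‖r - w‖ := by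
      rw [dist_eq_norm]
      congr 1
      rw [hr, hw]
      abel
    rw [hdpv, hdqv]
    have hwnorm : ‖w‖ ^ 2 = ∑ j, (w j) ^ 2 := by
      rw [EuclideanSpace.norm_eq]
      rw [Real.sq_sqrt (Finset.sum_nonneg fun j _ => sq_nonneg _)]
      simp [sq_abs]
    have hinprod : (inner ℝ r w : ℝ) = ∑ j, r j * w j := by
      rw [PiLp.inner_apply]
      simp [RCLike.inner_apply, conj_trivial, mul_comm]
    have hinner : ‖r - w‖ ^ 2 = ‖r‖ ^ 2 - 2 * (∑ j, r j * w j) + ‖w‖ ^ 2 := by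
      rw [norm_sub_sq_real, hinprod]
    set S : ℝ := ∑ j ∈ Finset.univ.erase i, r j * w j with hS
    have hsum : ∑ j, r j * w j = r i * w i + S := by
      rw [hS, ← Finset.add_sum_erase _ _ (Finset.mem_univ i)]
    have hwi : s * w i ≤ 0 := by
      have hwe : w i = v i - p i := by simp [hw]
      rw [hwe]; exact hv
    have hriwi : r i * w i ≤ 0 := by
      have h0 : (s * r i) * (s * w i) ≤ 0 := mul_nonpos_of_nonneg_of_nonpos hsri hwi
      calc r i * w i = s ^ 2 * (r i * w i) := by rw [hs2, one_mul]
        _ = (s * r i) * (s * w i) := by ring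
        _ ≤ 0 := h0
    -- Cauchy-Schwarz on the remaining coordinates
    have h2 : ∑ j ∈ Finset.univ.erase i, (r j) ^ 2 = ‖r‖ ^ 2 - (r i) ^ 2 := by
      rw [hnorm, ← Finset.add_sum_erase _ _ (Finset.mem_univ i)]; ring
    have hnn : 0 ≤ ‖r‖ ^ 2 - (r i) ^ 2 :=
      h2 ▸ Finset.sum_nonneg fun j _ => sq_nonneg _
    have hCS : S ^ 2 ≤ (‖r‖ ^ 2 - (r i) ^ 2) * ‖w‖ ^ 2 := by
      have h1 : S ^ 2 ≤ (∑ j ∈ Finset.univ.erase i, (r j) ^ 2) *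
          (∑ j ∈ Finset.univ.erase i, (w j) ^ 2) :=
        Finset.sum_mul_sq_le_sq_mul_sq _ _ _
      have h3 : ∑ j ∈ Finset.univ.erase i, (w j) ^ 2 ≤ ‖w‖ ^ 2 := by
        rw [hwnorm]
        exact Finset.sum_le_sum_of_subset_of_nonneg (Finset.erase_subset _ _)
          (fun j _ _ => sq_nonneg _)
      calc S ^ 2 ≤ _ := h1
        _ ≤ (‖r‖ ^ 2 - (r i) ^ 2) * ‖w‖ ^ 2 := by
            rw [h2]; exact mul_le_mul_of_nonneg_left h3 hnn
    -- conclude via the quadratic inequality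
    have hd1 : (1:ℝ) ≤ d := by exact_mod_cast hd0
    have hc : (0:ℝ) < 1 - β ^ 2 := by nlinarith [sq_nonneg β]
    have hmain : 0 < (1 - β ^ 2) * ‖w‖ ^ 2 - 2 * S + ‖r‖ ^ 2 := by
      apply quad_pos _ _ _ _ hc hR
      rcases eq_or_lt_of_le (norm_nonneg w) with hw0 | hw0
      · right
        have hS0 : S ^ 2 ≤ 0 := by
          have h' := hCS
          rw [← hw0] at h'
          simpa using h'
        nlinarith [sq_nonneg S]
      · left
        have h4 : ‖r‖ ^ 2 - (r i) ^ 2 < (1 - β ^ 2) * ‖r‖ ^ 2 := by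
          have h5 : β ^ 2 * ‖r‖ ^ 2 * d < ‖r‖ ^ 2 := by nlinarith [mul_pos hR hR]
          nlinarith
        calc S ^ 2 ≤ (‖r‖ ^ 2 - (r i) ^ 2) * ‖w‖ ^ 2 := hCS
          _ < ((1 - β ^ 2) * ‖r‖ ^ 2) * ‖w‖ ^ 2 :=
              mul_lt_mul_of_pos_right h4 (pow_pos hw0 2)
          _ = (1 - β ^ 2) * ‖w‖ ^ 2 * ‖r‖ ^ 2 := by ring
    have hgoal2 : (β * ‖w‖) ^ 2 < ‖r - w‖ ^ 2 := by
      rw [hinner, hsum]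
      nlinarith [hriwi, hmain]
    exact lt_of_pow_lt_pow_left₀ 2 (norm_nonneg (r - w)) hgoal2
  -- counting
  have hlost : ∀ v : EuclideanSpace ℝ (Fin d),
      (β * dist p v > dist q v) → ¬ (s * (v i - p i) ≤ 0) := by
    intro v hv hA
    exact absurd (key v hA) (not_lt.mpr hv.le)
  have h1 : V.countP (fun v => β * dist p v > dist q v) ≤
      V.countP (fun v => ¬ (s * (v i - p i) ≤ 0)) :=
    countP_mono_aux V hlost
  have h2 : V.countP (fun v => s * (v i - p i) ≤ 0) ≤
      V.countP (fun v => β * dist p v < dist q v) :=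
    countP_mono_aux V key
  -- the complement predicate is one of the median halves
  have h3 : (V.countP (fun v => ¬ (s * (v i - p i) ≤ 0)) : ℝ) ≤ (V.card : ℝ) / 2 := by
    rcases le_or_gt 0 (r i) with h | h
    · have he : V.countP (fun v => ¬ (s * (v i - p i) ≤ 0)) =
          V.countP (fun v => p i < v i) := by
        apply Multiset.countP_congr rfl
        intro v _
        simp only [hs, if_pos h, one_mul, not_le, sub_pos, eq_iff_iff]
      rw [he]; exact (hmed i).2
    · have he : V.countP (fun v => ¬ (s * (v i - p i) ≤ 0)) =
          V.countP (fun v => v i < p i) := by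
        apply Multiset.countP_congr rfl
        intro v _
        simp only [hs, if_neg (not_le.mpr h), eq_iff_iff, not_le]
        constructor
        · intro hvv; nlinarith
        · intro hvv; nlinarith
      rw [he]; exact (hmed i).1
  have h4 : V.countP (fun v => ¬ (s * (v i - p i) ≤ 0)) ≤
      V.countP (fun v => s * (v i - p i) ≤ 0) := by
    have hcard : V.countP (fun v => s * (v i - p i) ≤ 0) +
        V.countP (fun v => ¬ (s * (v i - p i) ≤ 0)) = V.card :=
      (Multiset.card_eq_countP_add_countP _ V).symm
    have hcr : (V.countP (fun v => s * (v i - p i) ≤ 0) : ℝ) +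
        (V.countP (fun v => ¬ (s * (v i - p i) ≤ 0)) : ℝ) = (V.card : ℝ) := by
      exact_mod_cast congrArg (Nat.cast : ℕ → ℝ) hcard
    have hfinal : (V.countP (fun v => ¬ (s * (v i - p i) ≤ 0)) : ℝ) ≤
        (V.countP (fun v => s * (v i - p i) ≤ 0) : ℝ) := by linarith
    exact_mod_cast hfinal
  exact h1.trans (h4.trans h2)
end

section
/- Let V be a finite multiset of n points in ℝ^2 and let ℓ1, ℓ2, ℓ3 be three lines through a common point p such that the angle between any two of them is π/3, and such that each ℓ_i is balanced with respect to V. Then for every β with 0 < β < √3/2 and every q ≠ p, the number of voters v ∈ V with β·|p v| < |q v| is at least the number of voters with β·|p v| > |q v|; hence β(p,V) ≥ √3/2. -/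
open scoped Classical

open scoped RealInnerProductSpace

/-- `p` is a β-plurality point for the multiset `V` in ℝ^d when, for every competitor `q`,
the number of voters lost by `p` is at most the number won. -/
def IsBetaPlurality (d : ℕ) (V : Multiset (EuclideanSpace ℝ (Fin d))) (β : ℝ)
    (p : EuclideanSpace ℝ (Fin d)) : Prop :=
  ∀ q : EuclideanSpace ℝ (Fin d),
    V.countP (fun v => β * dist p v > dist q v) ≤
      V.countP (fun v => β * dist p v < dist q v)

private lemma countP_mono'' {α : Type*} (s : Multiset α) {p q : α → Prop}
    [DecidablePred p] [DecidablePred q] (h : ∀ a, p a → q a) :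
    s.countP p ≤ s.countP q := by
  simp only [Multiset.countP_eq_card_filter]
  exact Multiset.card_le_card (s.monotone_filter_right fun a ha => h a ha)

private lemma le_of_sq_le_sq' {x y : ℝ} (hy : 0 ≤ y) (h : x ^ 2 ≤ y ^ 2) : x ≤ y := by
  nlinarith [sq_nonneg (x - y), sq_nonneg (x + y)]

private lemma sqrt3_sq : Real.sqrt 3 ^ 2 = 3 := Real.sq_sqrt (by norm_num)

private lemma sqrt3_lt_two : Real.sqrt 3 < 2 := by
  nlinarith [sqrt3_sq, Real.sqrt_nonneg 3]

/-- The key geometric estimate: if `m` is a unit vector, `w` lies in the closed half-space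
`⟪·, m⟫ ≥ 0` and `⟪r, m⟫ ≤ -(√3/2)‖r‖`, then `‖w - r‖ ≥ (√3/2)‖w‖`. -/
private lemma key_dist {F : Type*} [NormedAddCommGroup F] [InnerProductSpace ℝ F]
    (m w r : F) (hm : ‖m‖ = 1) (hw : 0 ≤ ⟪w, m⟫)
    (hr : ⟪r, m⟫ ≤ -(Real.sqrt 3 / 2 * ‖r‖)) :
    3 / 4 * ‖w‖ ^ 2 ≤ ‖w - r‖ ^ 2 := by
  have hs3 : (0:ℝ) ≤ Real.sqrt 3 / 2 * ‖r‖ := by positivity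
  have hc0 : ⟪r, m⟫ ≤ 0 := le_trans hr (by linarith)
  have hc2 : 3 / 4 * ‖r‖ ^ 2 ≤ ⟪r, m⟫ ^ 2 := by
    have h1 : Real.sqrt 3 / 2 * ‖r‖ ≤ -⟪r, m⟫ := by linarith
    nlinarith [mul_self_le_mul_self hs3 h1, sqrt3_sq]
  have hmm : (⟪m, m⟫ : ℝ) = 1 := by
    rw [real_inner_self_eq_norm_sq, hm]; norm_num
  have hw2 : ‖w - ⟪w, m⟫ • m‖ ^ 2 = ‖w‖ ^ 2 - ⟪w, m⟫ ^ 2 := by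
    rw [norm_sub_sq_real, real_inner_smul_right, norm_smul, hm, mul_one, Real.norm_eq_abs, sq_abs]
    ring
  have hr2 : ‖r - ⟪r, m⟫ • m‖ ^ 2 = ‖r‖ ^ 2 - ⟪r, m⟫ ^ 2 := by
    rw [norm_sub_sq_real, real_inner_smul_right, norm_smul, hm, mul_one, Real.norm_eq_abs, sq_abs]
    ring
  have hip : ⟪w - ⟪w, m⟫ • m, r - ⟪r, m⟫ • m⟫ = ⟪w, r⟫ - ⟪w, m⟫ * ⟪r, m⟫ := by
    simp only [inner_sub_left, inner_sub_right, real_inner_smul_left, real_inner_smul_right]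
    rw [hmm, real_inner_comm r m]
    ring
  have hCS := real_inner_le_norm (w - ⟪w, m⟫ • m) (r - ⟪r, m⟫ • m)
  rw [hip] at hCS
  have ha2 : ⟪w, m⟫ ^ 2 ≤ ‖w‖ ^ 2 := by
    have h := abs_real_inner_le_norm w m
    rw [hm, mul_one] at h
    nlinarith [sq_abs (⟪w, m⟫ : ℝ), abs_nonneg (⟪w, m⟫ : ℝ), norm_nonneg w]
  have hc2' : ⟪r, m⟫ ^ 2 ≤ ‖r‖ ^ 2 := by
    have h := abs_real_inner_le_norm r m
    rw [hm, mul_one] at h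
    nlinarith [sq_abs (⟪r, m⟫ : ℝ), abs_nonneg (⟪r, m⟫ : ℝ), norm_nonneg r]
  have hprodn : ‖w - ⟪w, m⟫ • m‖ * ‖r - ⟪r, m⟫ • m‖ ≤ ‖w‖ * ‖r‖ / 2 := by
    apply le_of_sq_le_sq' (by positivity)
    rw [mul_pow, hw2, hr2]
    nlinarith [sq_nonneg (⟪w, m⟫ : ℝ), sq_nonneg ‖w‖, hc2, hc2', ha2,
      mul_le_mul (sub_le_self (‖w‖ ^ 2) (sq_nonneg (⟪w, m⟫ : ℝ)))
        (by linarith : ‖r‖ ^ 2 - ⟪r, m⟫ ^ 2 ≤ ‖r‖ ^ 2 / 4)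
        (by linarith) (sq_nonneg ‖w‖)]
  have hac : 0 ≤ -(⟪w, m⟫ * ⟪r, m⟫) := by
    have := mul_nonneg hw (neg_nonneg.mpr hc0)
    rwa [mul_neg] at this
  have hwr : ⟪w, r⟫ ≤ ‖w‖ * ‖r‖ / 2 := by linarith
  rw [norm_sub_sq_real]
  nlinarith [sq_nonneg (‖w‖ / 2 - ‖r‖)]

private lemma max_sq (a b : ℝ) :
    a ^ 2 + a * b + b ^ 2 ≤ a ^ 2 ∨ a ^ 2 + a * b + b ^ 2 ≤ b ^ 2 ∨
      a ^ 2 + a * b + b ^ 2 ≤ (a + b) ^ 2 := by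
  rcases le_total 0 (a * b) with h | h
  · right; right; nlinarith
  rcases le_total 0 a with ha | ha <;> rcases le_total 0 b with hb | hb <;>
    rcases le_total (a ^ 2) (b ^ 2) with hab | hab
  · right; right; nlinarith
  · right; right; nlinarith
  · right; left; nlinarith [sq_nonneg (a + b)]
  · left; nlinarith [sq_nonneg (a + b)]
  · right; left; nlinarith [sq_nonneg (a + b)]
  · left; nlinarith [sq_nonneg (a + b)]
  · right; right; nlinarith
  · right; right; nlinarith

private lemma pick_sign {F : Type*} [NormedAddCommGroup F] [InnerProductSpace ℝ F]
    (u w : F) (h : 3 / 4 * ‖u‖ ^ 2 ≤ (⟪u, w⟫ : ℝ) ^ 2) :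
    Real.sqrt 3 / 2 * ‖u‖ ≤ ⟪u, w⟫ ∨ Real.sqrt 3 / 2 * ‖u‖ ≤ ⟪u, -w⟫ := by
  have habs : Real.sqrt 3 / 2 * ‖u‖ ≤ |(⟪u, w⟫ : ℝ)| := by
    apply le_of_sq_le_sq' (abs_nonneg _)
    rw [sq_abs, mul_pow, div_pow, sqrt3_sq]
    nlinarith
  rcases le_total 0 (⟪u, w⟫ : ℝ) with h0 | h0
  · left; rwa [abs_of_nonneg h0] at habs
  · right; rw [inner_neg_right]; rwa [abs_of_nonpos h0] at habs

/-- Two unit vectors in the plane at angle `2π/3` (inner product `-1/2`): every `u` is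
within `π/6` of one of the six unit vectors `±m0, ±m1, ±(m0+m1)`. -/
private lemma finish_dir (m0 m1 : EuclideanSpace ℝ (Fin 2))
    (hn0 : ‖m0‖ = 1) (hn1 : ‖m1‖ = 1) (h01 : (⟪m0, m1⟫ : ℝ) = -(1 / 2))
    (u : EuclideanSpace ℝ (Fin 2)) :
    ∃ w : EuclideanSpace ℝ (Fin 2), ‖w‖ = 1 ∧
      (w = m0 ∨ w = -m0 ∨ w = m1 ∨ w = -m1 ∨ w = m0 + m1 ∨ w = -(m0 + m1)) ∧
      Real.sqrt 3 / 2 * ‖u‖ ≤ ⟪u, w⟫ := by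
  have hm00 : (⟪m0, m0⟫ : ℝ) = 1 := by rw [real_inner_self_eq_norm_sq, hn0]; norm_num
  have hm11 : (⟪m1, m1⟫ : ℝ) = 1 := by rw [real_inner_self_eq_norm_sq, hn1]; norm_num
  have hnsum : ‖m0 + m1‖ = 1 := by
    have h : ‖m0 + m1‖ ^ 2 = 1 := by
      rw [norm_add_sq_real, hn0, hn1, h01]; norm_num
    rw [← Real.sqrt_sq (norm_nonneg (m0 + m1)), h, Real.sqrt_one]
  have hun : ‖u‖ ^ 2 ≤ 4 / 3 * ((⟪u, m0⟫ : ℝ) ^ 2 + ⟪u, m0⟫ * ⟪u, m1⟫ + ⟪u, m1⟫ ^ 2) := by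
    have hdep2 : ¬ LinearIndependent ℝ ![u, m0, m1] := by
      intro h
      have := h.fintype_card_le_finrank
      rw [finrank_euclideanSpace_fin] at this
      simp at this
    obtain ⟨c, hc, j, hj⟩ := Fintype.not_linearIndependent_iff.mp hdep2
    simp only [Fin.sum_univ_three, Matrix.cons_val_zero, Matrix.cons_val_one,
      Matrix.head_cons, Matrix.cons_val_two, Matrix.tail_cons] at hc
    have E1 := congrArg (fun v : EuclideanSpace ℝ (Fin 2) => (⟪v, m0⟫ : ℝ)) hc
    have E2 := congrArg (fun v : EuclideanSpace ℝ (Fin 2) => (⟪v, m1⟫ : ℝ)) hc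
    have E3 := congrArg (fun v : EuclideanSpace ℝ (Fin 2) => (⟪v, u⟫ : ℝ)) hc
    simp only [inner_add_left, real_inner_smul_left, inner_zero_left,
      real_inner_comm m0 m1, real_inner_comm u m0, real_inner_comm u m1,
      real_inner_self_eq_norm_sq, hn0, hn1, one_pow, mul_one, hm00, hm11, h01] at E1 E2 E3
    by_cases hc0 : c 0 = 0
    · exfalso
      rw [hc0] at E1 E2
      simp only [zero_mul, zero_add] at E1 E2
      have h1 : c 1 = 0 := by linarith
      have h2 : c 2 = 0 := by linarith
      fin_cases j <;> simp_all
    · have h1 : c 0 * ⟪u, m0⟫ = -(c 1) + c 2 / 2 := by linarith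
      have h2 : c 0 * ⟪u, m1⟫ = -(c 2) + c 1 / 2 := by linarith
      have h3 : c 0 * ‖u‖ ^ 2 = -(c 1 * ⟪u, m0⟫) - c 2 * ⟪u, m1⟫ := by linarith
      have hpos : 0 < c 0 ^ 2 :=
        lt_of_le_of_ne (sq_nonneg _) (Ne.symm (pow_ne_zero 2 hc0))
      have hL : c 0 ^ 2 * ‖u‖ ^ 2 = c 1 ^ 2 - c 1 * c 2 + c 2 ^ 2 := by
        calc c 0 ^ 2 * ‖u‖ ^ 2 = c 0 * (c 0 * ‖u‖ ^ 2) := by ring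
          _ = c 0 * (-(c 1 * ⟪u, m0⟫) - c 2 * ⟪u, m1⟫) := by rw [h3]
          _ = -(c 1 * (c 0 * ⟪u, m0⟫)) - c 2 * (c 0 * ⟪u, m1⟫) := by ring
          _ = -(c 1 * (-(c 1) + c 2 / 2)) - c 2 * (-(c 2) + c 1 / 2) := by rw [h1, h2]
          _ = c 1 ^ 2 - c 1 * c 2 + c 2 ^ 2 := by ring
      have hR : c 0 ^ 2 * ((⟪u, m0⟫ : ℝ) ^ 2 + ⟪u, m0⟫ * ⟪u, m1⟫ + ⟪u, m1⟫ ^ 2)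
          = 3 / 4 * (c 1 ^ 2 - c 1 * c 2 + c 2 ^ 2) := by
        calc c 0 ^ 2 * ((⟪u, m0⟫ : ℝ) ^ 2 + ⟪u, m0⟫ * ⟪u, m1⟫ + ⟪u, m1⟫ ^ 2)
            = (c 0 * ⟪u, m0⟫) ^ 2 + (c 0 * ⟪u, m0⟫) * (c 0 * ⟪u, m1⟫)
              + (c 0 * ⟪u, m1⟫) ^ 2 := by ring
          _ = (-(c 1) + c 2 / 2) ^ 2 + (-(c 1) + c 2 / 2) * (-(c 2) + c 1 / 2)
              + (-(c 2) + c 1 / 2) ^ 2 := by rw [h1, h2]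
          _ = 3 / 4 * (c 1 ^ 2 - c 1 * c 2 + c 2 ^ 2) := by ring
      have heq : ‖u‖ ^ 2
          = 4 / 3 * ((⟪u, m0⟫ : ℝ) ^ 2 + ⟪u, m0⟫ * ⟪u, m1⟫ + ⟪u, m1⟫ ^ 2) := by
        apply mul_left_cancel₀ (ne_of_gt hpos)
        rw [hL]
        linarith [hR]
      linarith [heq]
  rcases max_sq (⟪u, m0⟫ : ℝ) (⟪u, m1⟫ : ℝ) with hM | hM | hM
  · have h : 3 / 4 * ‖u‖ ^ 2 ≤ (⟪u, m0⟫ : ℝ) ^ 2 := by nlinarith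
    rcases pick_sign u m0 h with h' | h'
    · exact ⟨m0, hn0, Or.inl rfl, h'⟩
    · exact ⟨-m0, by rw [norm_neg]; exact hn0, Or.inr (Or.inl rfl), h'⟩
  · have h : 3 / 4 * ‖u‖ ^ 2 ≤ (⟪u, m1⟫ : ℝ) ^ 2 := by nlinarith
    rcases pick_sign u m1 h with h' | h'
    · exact ⟨m1, hn1, Or.inr (Or.inr (Or.inl rfl)), h'⟩
    · exact ⟨-m1, by rw [norm_neg]; exact hn1, Or.inr (Or.inr (Or.inr (Or.inl rfl))), h'⟩
  · have hadd : (⟪u, m0 + m1⟫ : ℝ) = ⟪u, m0⟫ + ⟪u, m1⟫ := inner_add_right _ _ _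
    have h : 3 / 4 * ‖u‖ ^ 2 ≤ (⟪u, m0 + m1⟫ : ℝ) ^ 2 := by rw [hadd]; nlinarith
    rcases pick_sign u (m0 + m1) h with h' | h'
    · exact ⟨m0 + m1, hnsum, Or.inr (Or.inr (Or.inr (Or.inr (Or.inl rfl)))), h'⟩
    · exact ⟨-(m0 + m1), by rw [norm_neg]; exact hnsum,
        Or.inr (Or.inr (Or.inr (Or.inr (Or.inr rfl)))), h'⟩

private lemma conv_helper (n : Fin 3 → EuclideanSpace ℝ (Fin 2))
    (m0 m1 : EuclideanSpace ℝ (Fin 2))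
    (h0 : m0 = n 0 ∨ m0 = -n 0) (h1 : m1 = n 1 ∨ m1 = -n 1) (h2 : m0 + m1 = n 2)
    (w : EuclideanSpace ℝ (Fin 2))
    (hw : w = m0 ∨ w = -m0 ∨ w = m1 ∨ w = -m1 ∨ w = m0 + m1 ∨ w = -(m0 + m1)) :
    ∃ i, w = n i ∨ w = -n i := by
  rcases hw with rfl | rfl | rfl | rfl | rfl | rfl
  · rcases h0 with h | h
    · exact ⟨0, Or.inl h⟩
    · exact ⟨0, Or.inr h⟩
  · rcases h0 with h | h
    · exact ⟨0, Or.inr (by rw [h])⟩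
    · exact ⟨0, Or.inl (by rw [h, neg_neg])⟩
  · rcases h1 with h | h
    · exact ⟨1, Or.inl h⟩
    · exact ⟨1, Or.inr h⟩
  · rcases h1 with h | h
    · exact ⟨1, Or.inr (by rw [h])⟩
    · exact ⟨1, Or.inl (by rw [h, neg_neg])⟩
  · exact ⟨2, Or.inl h2⟩
  · exact ⟨2, Or.inr (by rw [h2])⟩

/-- For three unit normals in the plane pairwise at angle `π/3`, every vector `u` makes an
angle of at most `π/6` with one of the six vectors `±n i`. -/
private lemma exists_strong_normal (n : Fin 3 → EuclideanSpace ℝ (Fin 2))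
    (hunit : ∀ i, ‖n i‖ = 1)
    (hangle : ∀ i j, i ≠ j → |(inner ℝ (n i) (n j) : ℝ)| = 1 / 2)
    (u : EuclideanSpace ℝ (Fin 2)) :
    ∃ m : EuclideanSpace ℝ (Fin 2), ‖m‖ = 1 ∧ (∃ i, m = n i ∨ m = -n i) ∧
      Real.sqrt 3 / 2 * ‖u‖ ≤ ⟪u, m⟫ := by
  have hself : ∀ i, (⟪n i, n i⟫ : ℝ) = 1 := fun i => by
    rw [real_inner_self_eq_norm_sq, hunit]; norm_num
  have hx : (⟪n 0, n 1⟫ : ℝ) = 1 / 2 ∨ (⟪n 0, n 1⟫ : ℝ) = -(1 / 2) :=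
    (abs_eq (by norm_num : (0:ℝ) ≤ 1 / 2)).mp (hangle 0 1 (by decide))
  have hy : (⟪n 0, n 2⟫ : ℝ) = 1 / 2 ∨ (⟪n 0, n 2⟫ : ℝ) = -(1 / 2) :=
    (abs_eq (by norm_num : (0:ℝ) ≤ 1 / 2)).mp (hangle 0 2 (by decide))
  have hz : (⟪n 1, n 2⟫ : ℝ) = 1 / 2 ∨ (⟪n 1, n 2⟫ : ℝ) = -(1 / 2) :=
    (abs_eq (by norm_num : (0:ℝ) ≤ 1 / 2)).mp (hangle 1 2 (by decide))
  -- three vectors in the plane are linearly dependent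
  have hdep : ¬ LinearIndependent ℝ n := by
    intro h
    have := h.fintype_card_le_finrank
    rw [finrank_euclideanSpace_fin] at this
    simp at this
  obtain ⟨g, hg, i, hi⟩ := Fintype.not_linearIndependent_iff.mp hdep
  have key : ∀ j, (⟪∑ k, g k • n k, n j⟫ : ℝ) = 0 := fun j => by rw [hg, inner_zero_left]
  have h0 := key 0
  have h1 := key 1
  have h2 := key 2
  rw [sum_inner, Fin.sum_univ_three] at h0 h1 h2
  simp only [real_inner_smul_left] at h0 h1 h2
  simp only [real_inner_comm (n 0) (n 1), real_inner_comm (n 0) (n 2),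
    real_inner_comm (n 1) (n 2), hself 0, hself 1, hself 2] at h0 h1 h2
  -- the product of the three cosines must be `-1/8`
  have hprod : (⟪n 0, n 1⟫ : ℝ) * ⟪n 0, n 2⟫ * ⟪n 1, n 2⟫ = -(1 / 8) := by
    rcases hx with hx' | hx' <;> rcases hy with hy' | hy' <;> rcases hz with hz' | hz' <;>
      simp only [hx', hy', hz'] at h0 h1 h2 ⊢ <;>
      first
        | (norm_num; done)
        | (exfalso
           refine hi ?_
           have hg0 : g 0 = 0 := by linarith
           have hg1 : g 1 = 0 := by linarith
           have hg2 : g 2 = 0 := by linarith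
           fin_cases i <;> assumption)
  -- expansion of the relevant squared norm
  have hexp : ∀ s t : ℝ,
      (⟪n 2 - (s • n 0 + t • n 1), n 2 - (s • n 0 + t • n 1)⟫ : ℝ)
        = 1 + s ^ 2 + t ^ 2 - 2 * s * ⟪n 0, n 2⟫ - 2 * t * ⟪n 1, n 2⟫
            + 2 * s * t * ⟪n 0, n 1⟫ := by
    intro s t
    simp only [inner_sub_left, inner_sub_right, inner_add_left, inner_add_right,
      real_inner_smul_left, real_inner_smul_right]
    simp only [real_inner_comm (n 0) (n 1), real_inner_comm (n 0) (n 2),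
      real_inner_comm (n 1) (n 2), hself 0, hself 1, hself 2]
    ring
  have build : ∀ s t : ℝ,
      (⟪n 2 - (s • n 0 + t • n 1), n 2 - (s • n 0 + t • n 1)⟫ : ℝ) = 0 →
      n 2 = s • n 0 + t • n 1 := by
    intro s t h
    have := inner_self_eq_zero.mp h
    rwa [sub_eq_zero] at this
  rcases hx with hx' | hx' <;> rcases hy with hy' | hy'
  · -- x = 1/2, y = 1/2, z = -1/2 : n 2 = n 0 - n 1
    have hz' : (⟪n 1, n 2⟫ : ℝ) = -(1 / 2) := by
      rw [hx', hy'] at hprod; linarith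
    have hn2 : n 2 = (1:ℝ) • n 0 + (-1:ℝ) • n 1 := by
      apply build
      rw [hexp, hx', hy', hz']; norm_num
    have hsum2 : n 0 + -n 1 = n 2 := by rw [hn2, one_smul, neg_one_smul]
    have h01' : (⟪n 0, -n 1⟫ : ℝ) = -(1 / 2) := by rw [inner_neg_right, hx']
    obtain ⟨w, hw1, hwm, hwle⟩ := finish_dir (n 0) (-n 1) (hunit 0)
      (by rw [norm_neg]; exact hunit 1) h01' u
    exact ⟨w, hw1, conv_helper n (n 0) (-n 1) (Or.inl rfl) (Or.inr rfl) hsum2 w hwm, hwle⟩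
  · -- x = 1/2, y = -1/2, z = 1/2 : n 2 = -n 0 + n 1
    have hz' : (⟪n 1, n 2⟫ : ℝ) = 1 / 2 := by
      rw [hx', hy'] at hprod; linarith
    have hn2 : n 2 = (-1:ℝ) • n 0 + (1:ℝ) • n 1 := by
      apply build
      rw [hexp, hx', hy', hz']; norm_num
    have hsum2 : -n 0 + n 1 = n 2 := by rw [hn2, one_smul, neg_one_smul]
    have h01' : (⟪-n 0, n 1⟫ : ℝ) = -(1 / 2) := by rw [inner_neg_left, hx']
    obtain ⟨w, hw1, hwm, hwle⟩ := finish_dir (-n 0) (n 1)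
      (by rw [norm_neg]; exact hunit 0) (hunit 1) h01' u
    exact ⟨w, hw1, conv_helper n (-n 0) (n 1) (Or.inr rfl) (Or.inl rfl) hsum2 w hwm, hwle⟩
  · -- x = -1/2, y = 1/2, z = 1/2 : n 2 = n 0 + n 1
    have hz' : (⟪n 1, n 2⟫ : ℝ) = 1 / 2 := by
      rw [hx', hy'] at hprod; linarith
    have hn2 : n 2 = (1:ℝ) • n 0 + (1:ℝ) • n 1 := by
      apply build
      rw [hexp, hx', hy', hz']; norm_num
    have hsum2 : n 0 + n 1 = n 2 := by rw [hn2, one_smul, one_smul]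
    obtain ⟨w, hw1, hwm, hwle⟩ := finish_dir (n 0) (n 1) (hunit 0) (hunit 1) hx' u
    exact ⟨w, hw1, conv_helper n (n 0) (n 1) (Or.inl rfl) (Or.inl rfl) hsum2 w hwm, hwle⟩
  · -- x = -1/2, y = -1/2, z = -1/2 : n 2 = -n 0 - n 1
    have hz' : (⟪n 1, n 2⟫ : ℝ) = -(1 / 2) := by
      rw [hx', hy'] at hprod; linarith
    have hn2 : n 2 = (-1:ℝ) • n 0 + (-1:ℝ) • n 1 := by
      apply build
      rw [hexp, hx', hy', hz']; norm_num
    have hsum2 : -n 0 + -n 1 = n 2 := by rw [hn2, neg_one_smul, neg_one_smul]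
    have h01' : (⟪-n 0, -n 1⟫ : ℝ) = -(1 / 2) := by
      rw [inner_neg_neg, hx']
    obtain ⟨w, hw1, hwm, hwle⟩ := finish_dir (-n 0) (-n 1)
      (by rw [norm_neg]; exact hunit 0) (by rw [norm_neg]; exact hunit 1) h01' u
    exact ⟨w, hw1, conv_helper n (-n 0) (-n 1) (Or.inr rfl) (Or.inr rfl) hsum2 w hwm, hwle⟩

/-- If three lines through a common point `p`, pairwise at angle `π/3` (described by unit
normals `n i` with `|⟪n i, n j⟫| = 1/2`), are all balanced with respect to `V`, then for every
`0 < β < √3/2` and every `q ≠ p` the voters won by `p` are at least the voters lost;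
hence `β(p,V) ≥ √3/2`. -/
theorem three_balanced_lines_give_beta_plurality
    (V : Multiset (EuclideanSpace ℝ (Fin 2)))
    (p : EuclideanSpace ℝ (Fin 2))
    (n : Fin 3 → EuclideanSpace ℝ (Fin 2))
    (hunit : ∀ i, ‖n i‖ = 1)
    (hangle : ∀ i j, i ≠ j → |(inner ℝ (n i) (n j) : ℝ)| = 1 / 2)
    (hbal : ∀ i,
      (V.countP (fun v => (inner ℝ (v - p) (n i) : ℝ) < 0) : ℝ) ≤ (V.card : ℝ) / 2 ∧
      (V.countP (fun v => 0 < (inner ℝ (v - p) (n i) : ℝ)) : ℝ) ≤ (V.card : ℝ) / 2) :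
    (∀ β : ℝ, 0 < β → β < Real.sqrt 3 / 2 →
      ∀ q : EuclideanSpace ℝ (Fin 2), q ≠ p →
        V.countP (fun v => β * dist p v > dist q v) ≤
          V.countP (fun v => β * dist p v < dist q v)) ∧
    Real.sqrt 3 / 2 ≤ sSup {β : ℝ | β ∈ Set.Ioc (0 : ℝ) 1 ∧ IsBetaPlurality 2 V β p} := by
  have main : ∀ β : ℝ, 0 < β → β < Real.sqrt 3 / 2 →
      ∀ q : EuclideanSpace ℝ (Fin 2), q ≠ p →
        V.countP (fun v => β * dist p v > dist q v) ≤
          V.countP (fun v => β * dist p v < dist q v) := by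
    intro β hβ0 hβ q hq
    obtain ⟨m, hm1, ⟨i, hmi⟩, hmu⟩ := exists_strong_normal n hunit hangle (p - q)
    -- every voter in the half-plane `⟪v - p, m⟫ ≥ 0` is won by `p`
    have hwin : ∀ v : EuclideanSpace ℝ (Fin 2), 0 ≤ (⟪v - p, m⟫ : ℝ) →
        β * dist p v < dist q v := by
      intro v hv
      have hr : (⟪q - p, m⟫ : ℝ) ≤ -(Real.sqrt 3 / 2 * ‖q - p‖) := by
        have h : (⟪q - p, m⟫ : ℝ) = -⟪p - q, m⟫ := by
          rw [← inner_neg_left, neg_sub]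
        rw [h, neg_le_neg_iff, norm_sub_rev q p]
        exact hmu
      have hkey := key_dist m (v - p) (q - p) hm1 hv hr
      have hdist : dist q v = ‖(v - p) - (q - p)‖ := by
        rw [dist_eq_norm, sub_sub_sub_cancel_right, norm_sub_rev]
      have hpv : dist p v = ‖v - p‖ := by rw [dist_eq_norm, norm_sub_rev]
      have hge : Real.sqrt 3 / 2 * dist p v ≤ dist q v := by
        rw [hdist, hpv]
        apply le_of_sq_le_sq' (norm_nonneg _)
        rw [mul_pow, div_pow, sqrt3_sq]
        nlinarith
      rcases eq_or_lt_of_le (dist_nonneg : (0:ℝ) ≤ dist p v) with h | h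
      · rw [← h, mul_zero]
        have hpv' : p = v := dist_eq_zero.mp h.symm
        rw [← hpv']
        exact dist_pos.mpr hq
      · exact lt_of_lt_of_le (mul_lt_mul_of_pos_right hβ h) hge
    have hNbound : (V.countP (fun v => (⟪v - p, m⟫ : ℝ) < 0) : ℝ) ≤ (V.card : ℝ) / 2 := by
      rcases hmi with h | h
      · subst h; exact (hbal i).1
      · have heq : V.countP (fun v => (⟪v - p, m⟫ : ℝ) < 0)
            = V.countP (fun v => 0 < (⟪v - p, n i⟫ : ℝ)) := by
          apply Multiset.countP_congr rfl
          intro v _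
          rw [h, inner_neg_right, eq_iff_iff, neg_lt_zero]
        rw [heq]; exact (hbal i).2
    have hWcount : V.countP (fun v => ¬ ((⟪v - p, m⟫ : ℝ) < 0)) ≤
        V.countP (fun v => β * dist p v < dist q v) :=
      countP_mono'' V fun v hv => hwin v (not_lt.mp hv)
    have hcard1 : V.card = V.countP (fun v => (⟪v - p, m⟫ : ℝ) < 0) +
        V.countP (fun v => ¬ ((⟪v - p, m⟫ : ℝ) < 0)) :=
      Multiset.card_eq_countP_add_countP _ _
    have hcard2 : V.card = V.countP (fun v => β * dist p v < dist q v) +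
        V.countP (fun v => ¬ (β * dist p v < dist q v)) :=
      Multiset.card_eq_countP_add_countP _ _
    have hLW : V.countP (fun v => β * dist p v > dist q v) ≤
        V.countP (fun v => ¬ (β * dist p v < dist q v)) :=
      countP_mono'' V fun v hv => not_lt.mpr (le_of_lt hv)
    have hhalf : (V.card : ℝ) / 2 ≤
        (V.countP (fun v => β * dist p v < dist q v) : ℝ) := by
      have h1 : (V.card : ℝ) = (V.countP (fun v => (⟪v - p, m⟫ : ℝ) < 0) : ℝ) +
          (V.countP (fun v => ¬ ((⟪v - p, m⟫ : ℝ) < 0)) : ℝ) := by exact_mod_cast hcard1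
      have h2 : (V.countP (fun v => ¬ ((⟪v - p, m⟫ : ℝ) < 0)) : ℝ) ≤
          (V.countP (fun v => β * dist p v < dist q v) : ℝ) := by exact_mod_cast hWcount
      linarith
    have hfinal : (V.countP (fun v => β * dist p v > dist q v) : ℝ) ≤
        (V.countP (fun v => β * dist p v < dist q v) : ℝ) := by
      have h2 : (V.card : ℝ) = (V.countP (fun v => β * dist p v < dist q v) : ℝ) +
          (V.countP (fun v => ¬ (β * dist p v < dist q v)) : ℝ) := by exact_mod_cast hcard2
      have h3 : (V.countP (fun v => β * dist p v > dist q v) : ℝ) ≤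
          (V.countP (fun v => ¬ (β * dist p v < dist q v)) : ℝ) := by exact_mod_cast hLW
      linarith
    exact_mod_cast hfinal
  refine ⟨main, ?_⟩
  have hpos : (0:ℝ) < Real.sqrt 3 / 2 := by positivity
  have hle1 : Real.sqrt 3 / 2 ≤ 1 := by linarith [sqrt3_lt_two]
  have hsub : Set.Ioo (0:ℝ) (Real.sqrt 3 / 2) ⊆
      {β : ℝ | β ∈ Set.Ioc (0 : ℝ) 1 ∧ IsBetaPlurality 2 V β p} := by
    intro β hβ
    refine ⟨⟨hβ.1, le_trans (le_of_lt hβ.2) hle1⟩, ?_⟩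
    intro q
    by_cases hq : q = p
    · rw [hq]
      have h : V.countP (fun v => β * dist p v > dist p v) = 0 := by
        apply Multiset.countP_eq_zero.mpr
        intro v _
        simp only [gt_iff_lt, not_lt]
        have h1 : (0:ℝ) ≤ 1 - β := by linarith [hβ.2, hle1]
        nlinarith [dist_nonneg (x := p) (y := v), h1]
      rw [h]
      exact Nat.zero_le _
    · exact main β hβ.1 hβ.2 q hq
  calc Real.sqrt 3 / 2 = sSup (Set.Ioo (0:ℝ) (Real.sqrt 3 / 2)) := (csSup_Ioo hpos).symm
    _ ≤ sSup {β : ℝ | β ∈ Set.Ioc (0 : ℝ) 1 ∧ IsBetaPlurality 2 V β p} :=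
        csSup_le_csSup ⟨1, fun β hβ => hβ.1.2⟩ (Set.nonempty_Ioo.mpr hpos) hsub
end

section
/- The function d ↦ β*_d is non-increasing: for d' > d ≥ 1, β*_{d'} ≤ β*_d, where β*_d is the supremum of all β ∈ (0,1] such that every finite multiset of voters in ℝ^d admits a β-plurality point. More concretely: if V is a finite multiset in ℝ^d with no β-plurality point, and V' is its image in ℝ^{d'} under the isometric embedding appending zero coordinates, then V' has no β-plurality point in ℝ^{d'}. -/
open scoped Classical

/-- `β*_d`: the supremum of all `β ∈ (0,1]` such that every finite multiset of voters in ℝ^d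
admits a β-plurality point. -/
noncomputable def betaStar (d : ℕ) : ℝ :=
  sSup {β : ℝ | β ∈ Set.Ioc (0 : ℝ) 1 ∧
    ∀ V : Multiset (EuclideanSpace ℝ (Fin d)), ∃ p, IsBetaPlurality d V β p}

/-- The isometric embedding of ℝ^d into ℝ^d' (`d ≤ d'`) appending zero coordinates. -/
def embed (d d' : ℕ) (h : d ≤ d') (x : EuclideanSpace ℝ (Fin d)) :
    EuclideanSpace ℝ (Fin d') :=
  WithLp.toLp 2 (fun i => if hi : (i : ℕ) < d then x ⟨i, hi⟩ else 0)

/-- Projection dropping the last coordinates. -/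
def proj (d d' : ℕ) (h : d ≤ d') (x : EuclideanSpace ℝ (Fin d')) :
    EuclideanSpace ℝ (Fin d) :=
  WithLp.toLp 2 (fun j => x (Fin.castLE h j))

lemma mem_castLEEmb {d d' : ℕ} (h : d ≤ d') (i : Fin d') :
    i ∈ (Finset.univ : Finset (Fin d)).map (Fin.castLEEmb h) ↔ (i : ℕ) < d := by
  simp only [Finset.mem_map, Finset.mem_univ, true_and]
  constructor
  · rintro ⟨j, rfl⟩; exact j.isLt
  · intro hi; exact ⟨⟨i, hi⟩, by ext; simp⟩

lemma embed_castLE {d d' : ℕ} (h : d ≤ d') (x : EuclideanSpace ℝ (Fin d)) (j : Fin d) :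
    embed d d' h x (Fin.castLE h j) = x j := by
  simp [embed]

/-- The embedding is an isometry. -/
lemma embed_dist {d d' : ℕ} (h : d ≤ d') (x y : EuclideanSpace ℝ (Fin d)) :
    dist (embed d d' h x) (embed d d' h y) = dist x y := by
  rw [EuclideanSpace.dist_eq, EuclideanSpace.dist_eq]
  congr 1
  rw [← Finset.sum_subset (Finset.subset_univ
      ((Finset.univ : Finset (Fin d)).map (Fin.castLEEmb h)))
      (by
        intro i _ hi
        rw [mem_castLEEmb h i] at hi
        simp [embed, hi])]
  rw [Finset.sum_map]
  exact Finset.sum_congr rfl fun j _ => by simp [embed_castLE]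

/-- Projecting a point can only decrease its distance to a point of the flat. -/
lemma proj_dist_le {d d' : ℕ} (h : d ≤ d') (p' : EuclideanSpace ℝ (Fin d'))
    (v : EuclideanSpace ℝ (Fin d)) :
    dist (proj d d' h p') v ≤ dist p' (embed d d' h v) := by
  rw [EuclideanSpace.dist_eq, EuclideanSpace.dist_eq]
  apply Real.sqrt_le_sqrt
  calc ∑ j : Fin d, dist (proj d d' h p' j) (v j) ^ 2
      = ∑ i ∈ (Finset.univ : Finset (Fin d)).map (Fin.castLEEmb h),
          dist (p' i) (embed d d' h v i) ^ 2 := by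
        rw [Finset.sum_map]
        exact Finset.sum_congr rfl fun j _ => by simp [proj, embed_castLE]
    _ ≤ ∑ i : Fin d', dist (p' i) (embed d d' h v i) ^ 2 :=
        Finset.sum_le_sum_of_subset_of_nonneg (Finset.subset_univ _)
          (fun i _ _ => by positivity)

/-- Core transfer lemma: if the embedded multiset has a β-plurality point, so does the
original. -/
lemma embed_plurality_transfer {d d' : ℕ} (h : d ≤ d')
    (V : Multiset (EuclideanSpace ℝ (Fin d))) {β : ℝ} (hβ : 0 < β)
    (p' : EuclideanSpace ℝ (Fin d'))
    (hp' : IsBetaPlurality d' (V.map (embed d d' h)) β p') :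
    IsBetaPlurality d V β (proj d d' h p') := by
  intro q
  have key := hp' (embed d d' h q)
  rw [Multiset.countP_map, Multiset.countP_map] at key
  rw [Multiset.countP_eq_card_filter, Multiset.countP_eq_card_filter]
  refine le_trans (le_trans
    (Multiset.card_le_card (Multiset.monotone_filter_right V ?_)) key)
    (Multiset.card_le_card (Multiset.monotone_filter_right V ?_))
  · intro v hv
    simp only [gt_iff_lt] at hv ⊢
    rw [embed_dist]
    calc dist q v < β * dist (proj d d' h p') v := hv
      _ ≤ β * dist p' (embed d d' h v) :=
          mul_le_mul_of_nonneg_left (proj_dist_le h p' v) hβ.le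
  · intro v hv
    rw [embed_dist] at hv
    calc β * dist (proj d d' h p') v ≤ β * dist p' (embed d d' h v) :=
          mul_le_mul_of_nonneg_left (proj_dist_le h p' v) hβ.le
      _ < dist q v := hv

/-- `d ↦ β*_d` is non-increasing. Concretely: if a finite multiset `V` in ℝ^d has no
β-plurality point, then its image `V'` in ℝ^d' under the zero-appending isometric embedding
has no β-plurality point either. -/
theorem betaStar_antitone
    (d d' : ℕ) (hdd' : d < d') :
    betaStar d' ≤ betaStar d ∧
    (∀ (V : Multiset (EuclideanSpace ℝ (Fin d))) (β : ℝ), β ∈ Set.Ioc (0 : ℝ) 1 →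
      (¬ ∃ p, IsBetaPlurality d V β p) →
      ¬ ∃ p', IsBetaPlurality d' (V.map (embed d d' hdd'.le)) β p') := by
  have part2 : ∀ (V : Multiset (EuclideanSpace ℝ (Fin d))) (β : ℝ),
      β ∈ Set.Ioc (0 : ℝ) 1 →
      (¬ ∃ p, IsBetaPlurality d V β p) →
      ¬ ∃ p', IsBetaPlurality d' (V.map (embed d d' hdd'.le)) β p' := by
    rintro V β hβ hV ⟨p', hp'⟩
    exact hV ⟨proj d d' hdd'.le p', embed_plurality_transfer hdd'.le V hβ.1 p' hp'⟩
  refine ⟨?_, part2⟩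
  set Sd' := {β : ℝ | β ∈ Set.Ioc (0 : ℝ) 1 ∧
    ∀ V : Multiset (EuclideanSpace ℝ (Fin d')), ∃ p, IsBetaPlurality d' V β p}
  set Sd := {β : ℝ | β ∈ Set.Ioc (0 : ℝ) 1 ∧
    ∀ V : Multiset (EuclideanSpace ℝ (Fin d)), ∃ p, IsBetaPlurality d V β p}
  have hsub : Sd' ⊆ Sd := by
    rintro β ⟨hβ, hall⟩
    refine ⟨hβ, fun V => ?_⟩
    by_contra hV
    exact part2 V β hβ hV (hall (V.map (embed d d' hdd'.le)))
  rcases Set.eq_empty_or_nonempty Sd' with hemp | hne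
  · rw [show betaStar d' = sSup Sd' from rfl, hemp, Real.sSup_empty]
    exact Real.sSup_nonneg (fun x hx => hx.1.1.le)
  · exact csSup_le_csSup ⟨1, fun x hx => hx.1.2⟩ hne hsub
end

section
/- Let V be a finite multiset of voters in ℝ^d, 0 < β ≤ 1, and p, p' ∈ ℝ^d such that |p' v| ≤ (1 + 2ε)·|p v| for all v ∈ V, where ε > 0. If p is a β-plurality point for V, then p' is a (β/(1+2ε))-plurality point for V; hence β(p', V) ≥ β(p, V)/(1 + 2ε). -/
open scoped Classical

/-- `β(p,V)`: the supremum of all `β ∈ (0,1]` such that `p` is a β-plurality point for `V`. -/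
noncomputable def betaOf (d : ℕ) (V : Multiset (EuclideanSpace ℝ (Fin d)))
    (p : EuclideanSpace ℝ (Fin d)) : ℝ :=
  sSup {β : ℝ | β ∈ Set.Ioc (0 : ℝ) 1 ∧ IsBetaPlurality d V β p}

private lemma countP_mono_mem {α : Type*} (s : Multiset α) (p q : α → Prop)
    [DecidablePred p] [DecidablePred q] (h : ∀ a ∈ s, p a → q a) :
    s.countP p ≤ s.countP q := by
  induction s using Multiset.induction with
  | empty => simp
  | cons a s ih =>
    have ih' := ih (fun b hb => h b (Multiset.mem_cons_of_mem hb))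
    have ha := h a (Multiset.mem_cons_self a s)
    rw [Multiset.countP_cons, Multiset.countP_cons]
    by_cases hp : p a
    · simp [hp, ha hp]; omega
    · simp [hp]; split <;> omega

private lemma transfer_aux
    (d : ℕ) (V : Multiset (EuclideanSpace ℝ (Fin d)))
    (p p' : EuclideanSpace ℝ (Fin d))
    (ε : ℝ) (hε : 0 < ε)
    (hclose : ∀ v ∈ V, dist p' v ≤ (1 + 2 * ε) * dist p v)
    (β : ℝ) (hβ0 : 0 < β)
    (hp : IsBetaPlurality d V β p) :
    IsBetaPlurality d V (β / (1 + 2 * ε)) p' := by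
  have hc : (0:ℝ) < 1 + 2 * ε := by linarith
  intro q
  have key : ∀ v ∈ V, β / (1 + 2 * ε) * dist p' v ≤ β * dist p v := by
    intro v hv
    have h1 : β / (1 + 2 * ε) * dist p' v ≤ β / (1 + 2 * ε) * ((1 + 2 * ε) * dist p v) := by
      apply mul_le_mul_of_nonneg_left (hclose v hv)
      positivity
    calc β / (1 + 2 * ε) * dist p' v ≤ β / (1 + 2 * ε) * ((1 + 2 * ε) * dist p v) := h1
      _ = β * dist p v := by field_simp
  calc V.countP (fun v => β / (1 + 2 * ε) * dist p' v > dist q v)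
      ≤ V.countP (fun v => β * dist p v > dist q v) := by
        exact countP_mono_mem _ _ _ (fun v hv h => lt_of_lt_of_le h (key v hv))
    _ ≤ V.countP (fun v => β * dist p v < dist q v) := hp q
    _ ≤ V.countP (fun v => β / (1 + 2 * ε) * dist p' v < dist q v) := by
        exact countP_mono_mem _ _ _ (fun v hv h => lt_of_le_of_lt (key v hv) h)

/-- If `|p'v| ≤ (1+2ε)·|pv|` for all voters `v`, then any β-plurality point `p` yields a
`(β/(1+2ε))`-plurality point `p'`; hence `β(p',V) ≥ β(p,V)/(1+2ε)`. -/
theorem plurality_transfer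
    (d : ℕ) (V : Multiset (EuclideanSpace ℝ (Fin d)))
    (p p' : EuclideanSpace ℝ (Fin d))
    (ε : ℝ) (hε : 0 < ε)
    (hclose : ∀ v ∈ V, dist p' v ≤ (1 + 2 * ε) * dist p v)
    (β : ℝ) (hβ0 : 0 < β) (hβ1 : β ≤ 1) :
    (IsBetaPlurality d V β p → IsBetaPlurality d V (β / (1 + 2 * ε)) p') ∧
    betaOf d V p / (1 + 2 * ε) ≤ betaOf d V p' := by
  have hc : (0:ℝ) < 1 + 2 * ε := by linarith
  have hc1 : (1:ℝ) ≤ 1 + 2 * ε := by linarith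
  constructor
  · exact transfer_aux d V p p' ε hε hclose β hβ0
  · set S' : Set ℝ := {γ : ℝ | γ ∈ Set.Ioc (0 : ℝ) 1 ∧ IsBetaPlurality d V γ p'}
    have hS'nonneg : 0 ≤ sSup S' := Real.sSup_nonneg (fun x hx => le_of_lt hx.1.1)
    have hS'bdd : BddAbove S' := ⟨1, fun x hx => hx.1.2⟩
    rw [div_le_iff₀ hc]
    apply Real.sSup_le _ (by positivity)
    intro γ hγ
    have hmem : γ / (1 + 2 * ε) ∈ S' := by
      refine ⟨⟨div_pos hγ.1.1 hc, ?_⟩, transfer_aux d V p p' ε hε hclose γ hγ.1.1 hγ.2⟩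
      calc γ / (1 + 2 * ε) ≤ γ / 1 := by
            apply div_le_div_of_nonneg_left (le_of_lt hγ.1.1) one_pos hc1
        _ ≤ 1 := by simpa using hγ.1.2
    have := le_csSup hS'bdd hmem
    calc γ = γ / (1 + 2 * ε) * (1 + 2 * ε) := by field_simp
      _ ≤ sSup S' * (1 + 2 * ε) := by
          apply mul_le_mul_of_nonneg_right this (le_of_lt hc)
end
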